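/- In the coordination game on n players with thresholds r_i = (i−1)/(n−1) for i = 1, …, n, every value z ∈ {0, 1/n, …, 1} satisfies z = F_c((n/(n−1))(z − ε)) for all ε ∈ (0, 1/n]; consequently the game admits exactly n+1 pure Nash equilibria. -/

import Mathlib

/-!
Since `r i = i / (n - 1)`, the inequality `r i ≤ n / (n - 1) * (k / n - ε)` reads `i ≤ k - n ε`,
and as `0 < n ε ≤ 1` this holds exactly for the `k` players `i < k`.

Switching player `i` from `x i` to `y` changes its utility by `(y - x i) (S - x i - d i)`, where
`S = ∑ j, x j`; so a `±1` profile is an equilibrium iff every `x i` has the sign of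
`S - x i - d i`. If `m` players play `+1`, then `S = 2m - n`, and with `d i = 2i - (n - 1)` this
says `x i = 1 ↔ i < m`. Hence the equilibria are exactly the `n + 1` threshold profiles.
-/

open Finset

/-- Coordination game utility. -/
def coordU {n : ℕ} (d : Fin n → ℝ) (i : Fin n) (x : Fin n → ℝ) : ℝ :=
  ∑ j ∈ Finset.univ.erase i, x i * x j - d i * x i

lemma natCast_le_sub_iff_lt {α : Type*} [Field α] [LinearOrder α] [IsStrictOrderedRing α]
    {i k : ℕ} {t : α} (ht₀ : 0 < t) (ht₁ : t ≤ 1) : (i : α) ≤ k - t ↔ i < k := by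
  constructor
  · intro h
    exact_mod_cast (show (i : α) < k by linarith)
  · intro h
    have : (i : α) + 1 ≤ k := by exact_mod_cast h
    linarith

lemma sum_eq_two_mul_card_sub {ι : Type*} [Fintype ι] {x : ι → ℝ} (hx : ∀ i, x i = 1 ∨ x i = -1) :
    ∑ i, x i = 2 * #{i | x i = 1} - Fintype.card ι := by
  have hx' : ∀ i, x i = 2 * (if x i = 1 then 1 else 0) - 1 := by
    intro i
    rcases hx i with h | h <;> norm_num [h]
  rw [Finset.sum_congr rfl fun i _ => hx' i, Finset.sum_sub_distrib, ← Finset.mul_sum,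
    Finset.sum_boole]
  simp

lemma ncard_setOf_val_lt {n k : ℕ} (hk : k ≤ n) : {i : Fin n | (i : ℕ) < k}.ncard = k := by
  rw [Set.ncard_eq_toFinset_card', Set.toFinset_ofPred, Fin.card_filter_val_lt, min_eq_right hk]

lemma ncard_uniform_thresholds_le {n k : ℕ} (hn : 2 ≤ n) (hk : k ≤ n) {ε : ℝ} (hε₀ : 0 < ε)
    (hε₁ : ε ≤ 1 / n) :
    {i : Fin n | (i : ℝ) / (n - 1) ≤ n / (n - 1) * (k / n - ε)}.ncard = k := by
  have hn₀ : (0 : ℝ) < n := by positivity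
  have hn₁ : (0 : ℝ) < n - 1 := by
    have : (2 : ℝ) ≤ n := by exact_mod_cast hn
    linarith
  have hscale : n / (n - 1) * (k / n - ε) = (k - n * ε) / (n - 1 : ℝ) := by
    field_simp
  have hnε₁ : n * ε ≤ 1 := by rwa [le_div_iff₀' hn₀] at hε₁
  simp_rw [hscale, div_le_div_iff_of_pos_right hn₁,
    natCast_le_sub_iff_lt (by positivity) hnε₁]
  exact ncard_setOf_val_lt hk

section Equilibria

variable {n : ℕ} (d : Fin n → ℝ)

def IsPureNash (x : Fin n → ℝ) : Prop :=
  (∀ i, x i = 1 ∨ x i = -1) ∧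
    ∀ (i : Fin n) (y : ℝ), (y = 1 ∨ y = -1) → coordU d i (Function.update x i y) ≤ coordU d i x

lemma coordU_update (i : Fin n) (x : Fin n → ℝ) (y : ℝ) :
    coordU d i (Function.update x i y) = y * (∑ j, x j - x i) - d i * y := by
  rw [coordU, Function.update_self, ← Finset.sum_erase_eq_sub (mem_univ i), Finset.mul_sum]
  congr 1
  refine Finset.sum_congr rfl fun j hj => ?_
  rw [Function.update_of_ne (Finset.ne_of_mem_erase hj)]

lemma coordU_eq (i : Fin n) (x : Fin n → ℝ) :
    coordU d i x = x i * (∑ j, x j - x i) - d i * x i := by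
  simpa using coordU_update d i x (x i)

lemma isPureNash_iff {x : Fin n → ℝ} (hx : ∀ i, x i = 1 ∨ x i = -1) :
    IsPureNash d x ↔ ∀ i, 0 ≤ x i * (∑ j, x j - x i - d i) := by
  have hgain : ∀ i y, coordU d i (Function.update x i y) - coordU d i x
      = (y - x i) * (∑ j, x j - x i - d i) := by
    intro i y
    rw [coordU_update, coordU_eq]
    ring
  refine ⟨fun h i => ?_, fun h => ⟨hx, fun i y hy => ?_⟩⟩
  · have hflip : -x i = 1 ∨ -x i = -1 := by rcases hx i with h' | h' <;> simp [h']
    have := hgain i (-x i)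
    linarith [h.2 i (-x i) hflip]
  · have hgi := hgain i y
    have hi := h i
    rcases hy with rfl | rfl <;> rcases hx i with h' | h' <;> rw [h'] at hgi hi <;> linarith

end Equilibria

def thresholdProfile (n k : ℕ) : Fin n → ℝ := fun i => if (i : ℕ) < k then 1 else -1

section ThresholdProfile

variable {n k : ℕ}

lemma thresholdProfile_eq_one_or (i : Fin n) :
    thresholdProfile n k i = 1 ∨ thresholdProfile n k i = -1 := by
  unfold thresholdProfile
  split_ifs <;> simp

lemma thresholdProfile_eq_one_iff {i : Fin n} : thresholdProfile n k i = 1 ↔ (i : ℕ) < k := by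
  unfold thresholdProfile
  split_ifs with h <;> norm_num [h]

lemma card_thresholdProfile_eq_one (hk : k ≤ n) : #{i | thresholdProfile n k i = 1} = k := by
  simp_rw [thresholdProfile_eq_one_iff]
  rw [Fin.card_filter_val_lt, min_eq_right hk]

lemma eq_thresholdProfile_iff {x : Fin n → ℝ} (hx : ∀ i, x i = 1 ∨ x i = -1) :
    x = thresholdProfile n k ↔ ∀ i, (x i = 1 ↔ (i : ℕ) < k) := by
  refine funext_iff.trans (forall_congr' fun i => ?_)
  rw [← thresholdProfile_eq_one_iff]
  rcases hx i with h | h <;> rcases thresholdProfile_eq_one_or (k := k) i with h' | h' <;>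
    norm_num [h, h']

end ThresholdProfile

/-- The condition of `isPureNash_iff` for player `i` playing `a`, when `m` players play `+1` and
`d i = 2 i - (n - 1)`. -/
lemma nash_condition_uniform_iff {a : ℝ} (ha : a = 1 ∨ a = -1) (i m n : ℕ) :
    0 ≤ a * ((2 * m - n : ℝ) - a - (2 * i - (n - 1))) ↔ (a = 1 ↔ i < m) := by
  rcases ha with rfl | rfl
  · rw [iff_true_intro rfl, true_iff, ← Nat.add_one_le_iff, ← Nat.cast_le (α := ℝ)]
    push_cast
    constructor <;> intro <;> linarith
  · rw [iff_false_intro (by norm_num : (-1 : ℝ) ≠ 1), false_iff, not_lt, ← Nat.cast_le (α := ℝ)]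
    constructor <;> intro <;> linarith

theorem isPureNash_iff_exists_thresholdProfile {n : ℕ} {d : Fin n → ℝ}
    (hd : ∀ i, d i = 2 * (i : ℝ) - ((n : ℝ) - 1)) {x : Fin n → ℝ} :
    IsPureNash d x ↔ ∃ k ≤ n, thresholdProfile n k = x := by
  constructor
  · intro h
    have hsign := (isPureNash_iff d h.1).1 h
    refine ⟨#{i | x i = 1}, (card_filter_le _ _).trans_eq (card_fin n),
      ((eq_thresholdProfile_iff h.1).2 fun i => ?_).symm⟩
    have := hsign i
    rw [sum_eq_two_mul_card_sub h.1, Fintype.card_fin, hd] at this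
    exact (nash_condition_uniform_iff (h.1 i) _ _ _).1 this
  · rintro ⟨k, hk, rfl⟩
    refine (isPureNash_iff d thresholdProfile_eq_one_or).2 fun i => ?_
    rw [sum_eq_two_mul_card_sub thresholdProfile_eq_one_or, card_thresholdProfile_eq_one hk,
      Fintype.card_fin, hd]
    exact (nash_condition_uniform_iff (thresholdProfile_eq_one_or i) _ _ _).2 thresholdProfile_eq_one_iff

theorem ncard_setOf_isPureNash {n : ℕ} {d : Fin n → ℝ}
    (hd : ∀ i, d i = 2 * (i : ℝ) - ((n : ℝ) - 1)) :
    {x | IsPureNash d x}.ncard = n + 1 := by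
  have himage : {x | IsPureNash d x} = thresholdProfile n '' Set.Iic n := by
    ext x
    simp [isPureNash_iff_exists_thresholdProfile hd]
  have hinj : Set.InjOn (thresholdProfile n) (Set.Iic n) :=
    Set.LeftInvOn.injOn (f₁' := fun x => #{i | x i = 1}) fun k hk => card_thresholdProfile_eq_one hk
  rw [himage, hinj.ncard_image, Set.ncard_Iic_nat]

/-- Coordination game with thresholds r_i = (i−1)/(n−1), i = 1,…,n (here
indexed i = 0,…,n−1 with r_i = i/(n−1), corresponding to weights
d_i = 2i − (n−1)): every z ∈ {0,1/n,…,1} satisfies the equilibrium equation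
z = F_c((n/(n−1))(z−ε)) for all ε ∈ (0,1/n], and the game admits exactly
n+1 pure Nash equilibria. -/
theorem coord_uniform_thresholds {n : ℕ} (hn : 2 ≤ n)
    (r : Fin n → ℝ) (hr : ∀ i, r i = (i : ℝ) / ((n : ℝ) - 1))
    (d : Fin n → ℝ) (hd : ∀ i, d i = 2 * (i : ℝ) - ((n : ℝ) - 1))
    (Fc : ℝ → ℝ) (hFc : ∀ z, Fc z = (({i : Fin n | r i ≤ z}.ncard : ℝ)) / n) :
    (∀ k : ℕ, k ≤ n → ∀ ε : ℝ, 0 < ε → ε ≤ 1 / (n : ℝ) →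
      (k : ℝ) / n = Fc (((n : ℝ) / ((n : ℝ) - 1)) * ((k : ℝ) / n - ε))) ∧
    {x : Fin n → ℝ | (∀ i, x i = 1 ∨ x i = -1) ∧
      ∀ (i : Fin n) (y : ℝ), (y = 1 ∨ y = -1) →
        coordU d i (Function.update x i y) ≤ coordU d i x}.ncard = n + 1 := by
  refine ⟨fun k hk ε hε₀ hε₁ => ?_, ncard_setOf_isPureNash hd⟩
  simp only [hFc, hr]
  rw [ncard_uniform_thresholds_le hn hk hε₀ hε₁]
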